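/- arXiv:2503.01800 — 2 statements merged into one kernel-verified Lean document; each statement's English description precedes it below -/
import Mathlib

section
/- Let ε > 0, v ∈ ℝ³, t₁ ≠ t₂ ∈ ℝ, and m₁ ≠ m₂ ∈ ℝ³. Suppose that |x + t₁ v - m₁| ≤ ε and |x + t₂ v - m₂| ≤ ε for some x ∈ ℝ³. Then the cross product satisfies |v × (m₁ - m₂)| ≤ 2ε |m₁ - m₂| / |t₁ - t₂|. In particular, v is almost parallel to the nonzero vector m₁ - m₂ in the sense that the angle deviation is of size O(ε / (|t₁-t₂| |v|)). -/
/-- The cross product on `EuclideanSpace ℝ (Fin 3)`. -/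
noncomputable def cross3 (a b : EuclideanSpace ℝ (Fin 3)) : EuclideanSpace ℝ (Fin 3) :=
  (WithLp.equiv 2 (Fin 3 → ℝ)).symm
    (crossProduct (WithLp.equiv 2 (Fin 3 → ℝ) a) (WithLp.equiv 2 (Fin 3 → ℝ) b))

lemma cross3_apply (a b : EuclideanSpace ℝ (Fin 3)) (i : Fin 3) :
    cross3 a b i = (crossProduct (a : Fin 3 → ℝ) (b : Fin 3 → ℝ)) i := rfl

lemma norm_cross3_le (a b : EuclideanSpace ℝ (Fin 3)) :
    ‖cross3 a b‖ ≤ ‖a‖ * ‖b‖ := by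
  have h : ∀ y : EuclideanSpace ℝ (Fin 3), ‖y‖ ^ 2 = ∑ i, y i ^ 2 := by
    intro y
    rw [EuclideanSpace.norm_eq, Real.sq_sqrt (by positivity)]
    simp [Real.norm_eq_abs, sq_abs]
  have key : ‖cross3 a b‖ ^ 2 ≤ (‖a‖ * ‖b‖) ^ 2 := by
    rw [mul_pow, h, h, h]
    simp only [Fin.sum_univ_three, cross3_apply, crossProduct]
    simp only [LinearMap.mk₂_apply, Matrix.cons_val_zero, Matrix.cons_val_one, Matrix.head_cons,
      Matrix.cons_val_two, Matrix.tail_cons]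
    nlinarith [sq_nonneg (a 0 * b 0 + a 1 * b 1 + a 2 * b 2),
      sq_nonneg (a 0 * b 1 - a 1 * b 0), sq_nonneg (a 0 * b 2 - a 2 * b 0),
      sq_nonneg (a 1 * b 2 - a 2 * b 1)]
  nlinarith [norm_nonneg (cross3 a b), mul_nonneg (norm_nonneg a) (norm_nonneg b)]

lemma cross3_smul_left (c : ℝ) (a b : EuclideanSpace ℝ (Fin 3)) :
    cross3 (c • a) b = c • cross3 a b := by
  unfold cross3
  simp only [WithLp.equiv_apply, WithLp.equiv_symm_apply, WithLp.ofLp_smul, LinearMap.map_smul, LinearMap.smul_apply, WithLp.toLp_smul]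

lemma cross3_sub_left (a a' b : EuclideanSpace ℝ (Fin 3)) :
    cross3 (a - a') b = cross3 a b - cross3 a' b := by
  unfold cross3
  simp only [WithLp.equiv_apply, WithLp.equiv_symm_apply, WithLp.ofLp_sub, map_sub, LinearMap.sub_apply, WithLp.toLp_sub]

lemma cross3_self (a : EuclideanSpace ℝ (Fin 3)) : cross3 a a = 0 := by
  unfold cross3
  rw [cross_self]
  rfl

theorem two_collisions_almost_parallel (ε : ℝ) (hε : 0 < ε)
    (x v m₁ m₂ : EuclideanSpace ℝ (Fin 3)) (t₁ t₂ : ℝ)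
    (ht : t₁ ≠ t₂) (hm : m₁ ≠ m₂)
    (h₁ : ‖x + t₁ • v - m₁‖ ≤ ε) (h₂ : ‖x + t₂ • v - m₂‖ ≤ ε) :
    ‖cross3 v (m₁ - m₂)‖ ≤ 2 * ε * ‖m₁ - m₂‖ / |t₁ - t₂| := by
  set d := t₁ - t₂ with hd
  set w := m₁ - m₂ with hw
  have hdne : d ≠ 0 := sub_ne_zero.mpr ht
  have hdiff : ‖d • v - w‖ ≤ 2 * ε := by
    have : d • v - w = (x + t₁ • v - m₁) - (x + t₂ • v - m₂) := by
      simp only [hd, hw, sub_smul]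
      abel
    rw [this]
    calc ‖(x + t₁ • v - m₁) - (x + t₂ • v - m₂)‖
        ≤ ‖x + t₁ • v - m₁‖ + ‖x + t₂ • v - m₂‖ := norm_sub_le _ _
      _ ≤ 2 * ε := by linarith
  have hcross : cross3 (d • v - w) w = d • cross3 v w := by
    rw [cross3_sub_left, cross3_smul_left, cross3_self, sub_zero]
  have hb : ‖cross3 (d • v - w) w‖ ≤ 2 * ε * ‖w‖ := by
    calc ‖cross3 (d • v - w) w‖ ≤ ‖d • v - w‖ * ‖w‖ := norm_cross3_le _ _
      _ ≤ 2 * ε * ‖w‖ := by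
          apply mul_le_mul_of_nonneg_right hdiff (norm_nonneg _)
  rw [hcross, norm_smul, Real.norm_eq_abs] at hb
  rw [le_div_iff₀ (abs_pos.mpr hdne)]
  linarith [hb]
end

section
/- Let d ∈ {2, 3} and let u₁, u₂ ∈ S^{d-1} be fixed unit vectors. Then for every δ ∈ (0, 1], the surface measure of the set {ω ∈ S^{d-1} : |R_ω u₁ - u₂| ≤ δ}, where R_ω(w) = w - 2(w·ω)ω, is at most C_d · δ for a constant C_d depending only on d. -/
open MeasureTheory Real
open scoped RealInnerProductSpace ENNReal

lemma lipCos : LipschitzWith 1 Real.cos := by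
  apply lipschitzWith_of_nnnorm_deriv_le Real.differentiable_cos
  intro x
  rw [Real.deriv_cos']
  rw [← NNReal.coe_le_coe, coe_nnnorm, Real.norm_eq_abs]
  simpa using Real.abs_sin_le_one x

lemma lipSin : LipschitzWith 1 Real.sin := by
  apply lipschitzWith_of_nnnorm_deriv_le Real.differentiable_sin
  intro x
  rw [Real.deriv_sin]
  rw [← NNReal.coe_le_coe, coe_nnnorm, Real.norm_eq_abs]
  simpa using Real.abs_cos_le_one x

lemma sq34 {s : ℝ} (hs : |s| ≤ Real.sqrt 3 / 2) : s ^ 2 ≤ 3 / 4 := by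
  have h1 : Real.sqrt 3 ^ 2 = 3 := Real.sq_sqrt (by norm_num)
  have h2 : |s| ^ 2 = s ^ 2 := sq_abs s
  nlinarith [abs_nonneg s, Real.sqrt_nonneg 3]

lemma sqrtdiff {s s' : ℝ} (hs : |s| ≤ Real.sqrt 3 / 2) (hs' : |s'| ≤ Real.sqrt 3 / 2) :
    |Real.sqrt (1 - s ^ 2) - Real.sqrt (1 - s' ^ 2)| ≤ Real.sqrt 3 * |s - s'| := by
  have h3 : Real.sqrt 3 ^ 2 = 3 := Real.sq_sqrt (by norm_num)
  have h3n : (0:ℝ) ≤ Real.sqrt 3 := Real.sqrt_nonneg 3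
  have hs2 : s ^ 2 ≤ 3 / 4 := sq34 hs
  have hs'2 : s' ^ 2 ≤ 3 / 4 := sq34 hs'
  set a := Real.sqrt (1 - s ^ 2) with ha
  set b := Real.sqrt (1 - s' ^ 2) with hb
  have ha2 : a ^ 2 = 1 - s ^ 2 := Real.sq_sqrt (by nlinarith)
  have hb2 : b ^ 2 = 1 - s' ^ 2 := Real.sq_sqrt (by nlinarith)
  have haq : (1:ℝ)/2 ≤ a := by
    rw [ha]
    rw [show (1:ℝ)/2 = Real.sqrt (1/4) by rw [show (1:ℝ)/4 = (1/2)^2 by norm_num, Real.sqrt_sq]; norm_num]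
    exact Real.sqrt_le_sqrt (by nlinarith)
  have hbq : (1:ℝ)/2 ≤ b := by
    rw [hb]
    rw [show (1:ℝ)/2 = Real.sqrt (1/4) by rw [show (1:ℝ)/4 = (1/2)^2 by norm_num, Real.sqrt_sq]; norm_num]
    exact Real.sqrt_le_sqrt (by nlinarith)
  have hss : |s + s'| ≤ Real.sqrt 3 := by
    calc |s + s'| ≤ |s| + |s'| := abs_add_le s s'
    _ ≤ Real.sqrt 3 := by linarith
  have key : (a - b) * (a + b) = s' ^ 2 - s ^ 2 := by
    have h0 : (a - b) * (a + b) = a ^ 2 - b ^ 2 := by ring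
    rw [h0, ha2, hb2]; ring
  have key2 : (b - a) * (a + b) = s ^ 2 - s' ^ 2 := by
    have h0 : (b - a) * (a + b) = b ^ 2 - a ^ 2 := by ring
    rw [h0, ha2, hb2]; ring
  have habs1 : s' ^ 2 - s ^ 2 ≤ Real.sqrt 3 * |s - s'| := by
    have h0 : s' ^ 2 - s ^ 2 = (s + s') * (s' - s) := by ring
    rw [h0]
    calc (s + s') * (s' - s) ≤ |(s + s') * (s' - s)| := le_abs_self _
      _ = |s + s'| * |s - s'| := by rw [abs_mul, abs_sub_comm]
      _ ≤ Real.sqrt 3 * |s - s'| := mul_le_mul_of_nonneg_right hss (abs_nonneg _)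
  have habs2 : s ^ 2 - s' ^ 2 ≤ Real.sqrt 3 * |s - s'| := by
    have h0 : s ^ 2 - s' ^ 2 = (s + s') * (s - s') := by ring
    rw [h0]
    calc (s + s') * (s - s') ≤ |(s + s') * (s - s')| := le_abs_self _
      _ = |s + s'| * |s - s'| := by rw [abs_mul]
      _ ≤ Real.sqrt 3 * |s - s'| := mul_le_mul_of_nonneg_right hss (abs_nonneg _)
  have hrhs : 0 ≤ Real.sqrt 3 * |s - s'| := mul_nonneg h3n (abs_nonneg _)
  rw [abs_sub_le_iff]
  constructor
  · rcases le_or_gt (a - b) 0 with hab | hab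
    · linarith
    · have : a - b ≤ (a - b) * (a + b) := by nlinarith
      linarith [key ▸ this]
  · rcases le_or_gt (b - a) 0 with hab | hab
    · linarith
    · have : b - a ≤ (b - a) * (a + b) := by nlinarith
      linarith [key2 ▸ this]

lemma circleParam {p q r : ℝ} (hr : 0 < r) (h : p ^ 2 + q ^ 2 = r ^ 2) :
    ∃ θ ∈ Set.Icc (-Real.pi) Real.pi, p = r * Real.cos θ ∧ q = r * Real.sin θ := by
  have hx : |p / r| ≤ 1 := by
    rw [abs_div, abs_of_pos hr, div_le_one hr]
    nlinarith [sq_nonneg q, abs_nonneg p, sq_abs p]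
  have hx1 : -1 ≤ p / r := by cases' abs_le.mp hx with h1 h2; linarith
  have hx2 : p / r ≤ 1 := (abs_le.mp hx).2
  have hcos : Real.cos (Real.arccos (p / r)) = p / r := Real.cos_arccos hx1 hx2
  have hsin : Real.sin (Real.arccos (p / r)) = Real.sqrt (1 - (p / r) ^ 2) := Real.sin_arccos _
  have hsq : Real.sqrt (1 - (p / r) ^ 2) = |q| / r := by
    rw [show 1 - (p / r) ^ 2 = (q / r) ^ 2 by field_simp; nlinarith]
    rw [Real.sqrt_sq_eq_abs, abs_div, abs_of_pos hr]
  rcases le_or_gt 0 q with hq | hq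
  · refine ⟨Real.arccos (p / r), ⟨by linarith [Real.arccos_nonneg (p/r), Real.pi_pos], Real.arccos_le_pi _⟩, ?_, ?_⟩
    · rw [hcos]; field_simp
    · rw [hsin, hsq, abs_of_nonneg hq]; field_simp
  · refine ⟨-Real.arccos (p / r), ⟨by linarith [Real.arccos_le_pi (p/r)], by linarith [Real.arccos_nonneg (p/r), Real.pi_pos]⟩, ?_, ?_⟩
    · rw [Real.cos_neg, hcos]; field_simp
    · rw [Real.sin_neg, hsin, hsq, abs_of_neg hq]; field_simp

lemma extendBasis {d : ℕ} (hd : 0 < d) (e : EuclideanSpace ℝ (Fin d)) (he : ‖e‖ = 1) :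
    ∃ b : OrthonormalBasis (Fin d) ℝ (EuclideanSpace ℝ (Fin d)), b ⟨0, hd⟩ = e := by
  have card : Module.finrank ℝ (EuclideanSpace ℝ (Fin d)) = Fintype.card (Fin d) := by
    simp [finrank_euclideanSpace]
  have horth : Orthonormal ℝ (Set.restrict {(⟨0, hd⟩ : Fin d)} (fun _ : Fin d => e)) := by
    constructor
    · intro i; exact he
    · intro i j hij
      exact absurd (Subtype.ext (i.2.trans j.2.symm)) hij
  obtain ⟨b, hb⟩ := Orthonormal.exists_orthonormalBasis_extension_of_card_eq card horth
  exact ⟨b, hb _ rfl⟩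

lemma band2 (e : EuclideanSpace ℝ (Fin 2)) (he : ‖e‖ = 1) (t : ℝ) (ht : 0 < t)
    (ht' : t ≤ Real.sqrt 3 / 2) :
    μH[1] {ω : EuclideanSpace ℝ (Fin 2) | ‖ω‖ = 1 ∧ |⟪e, ω⟫| ≤ t}
      ≤ ENNReal.ofReal (700 * t) := by
  obtain ⟨b, hb0⟩ := extendBasis (by norm_num) e he
  have hb1 : ‖b 1‖ = 1 := b.orthonormal.1 1
  set f : ℝ → ℝ → EuclideanSpace ℝ (Fin 2) := fun ε s => s • b ⟨0, by norm_num⟩ + (ε * Real.sqrt (1 - s ^ 2)) • b 1 with hf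
  -- Lipschitz
  have hlip : ∀ ε : ℝ, |ε| = 1 →
      LipschitzOnWith 3 (f ε) (Set.Icc (-(Real.sqrt 3 / 2)) (Real.sqrt 3 / 2)) := by
    intro ε hε
    rw [lipschitzOnWith_iff_dist_le_mul]
    intro x hx y hy
    have hx' : |x| ≤ Real.sqrt 3 / 2 := abs_le.mpr ⟨by linarith [hx.1], hx.2⟩
    have hy' : |y| ≤ Real.sqrt 3 / 2 := abs_le.mpr ⟨by linarith [hy.1], hy.2⟩
    have hsq := sqrtdiff hx' hy'
    have h3 : Real.sqrt 3 ≤ 2 := by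
      nlinarith [Real.sq_sqrt (show (0:ℝ) ≤ 3 by norm_num), Real.sqrt_nonneg 3]
    have hd : dist (f ε x) (f ε y) ≤ |x - y| + |Real.sqrt (1 - x ^ 2) - Real.sqrt (1 - y ^ 2)| := by
      rw [dist_eq_norm, hf]
      have h0 : (x • b ⟨0, by norm_num⟩ + (ε * Real.sqrt (1 - x ^ 2)) • b 1) -
          (y • b ⟨0, by norm_num⟩ + (ε * Real.sqrt (1 - y ^ 2)) • b 1)
          = (x - y) • b ⟨0, by norm_num⟩ + (ε * (Real.sqrt (1 - x ^ 2) - Real.sqrt (1 - y ^ 2))) • b 1 := by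
        module
      rw [h0]
      calc ‖(x - y) • b ⟨0, by norm_num⟩ + (ε * (Real.sqrt (1 - x ^ 2) - Real.sqrt (1 - y ^ 2))) • b 1‖
          ≤ ‖(x - y) • b ⟨0, by norm_num⟩‖ + ‖(ε * (Real.sqrt (1 - x ^ 2) - Real.sqrt (1 - y ^ 2))) • b 1‖ :=
            norm_add_le _ _
        _ = |x - y| + |Real.sqrt (1 - x ^ 2) - Real.sqrt (1 - y ^ 2)| := by
            rw [norm_smul, norm_smul, hb0, he, hb1, Real.norm_eq_abs, Real.norm_eq_abs, abs_mul, hε]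
            ring
    calc dist (f ε x) (f ε y) ≤ |x - y| + |Real.sqrt (1 - x ^ 2) - Real.sqrt (1 - y ^ 2)| := hd
      _ ≤ |x - y| + Real.sqrt 3 * |x - y| := by linarith
      _ ≤ 3 * |x - y| := by nlinarith [abs_nonneg (x - y)]
      _ = 3 * dist x y := by rw [Real.dist_eq]
  -- coverage
  have cover : {ω : EuclideanSpace ℝ (Fin 2) | ‖ω‖ = 1 ∧ |⟪e, ω⟫| ≤ t}
      ⊆ f 1 '' Set.Icc (-t) t ∪ f (-1) '' Set.Icc (-t) t := by
    rintro ω ⟨hn, hip⟩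
    set s := ⟪b ⟨0, by norm_num⟩, ω⟫ with hs
    set c := ⟪b 1, ω⟫ with hc
    have hsum : s • b ⟨0, by norm_num⟩ + c • b 1 = ω := by
      have h0 := b.sum_repr' ω
      rw [Fin.sum_univ_two] at h0
      exact h0
    have hparse : s ^ 2 + c ^ 2 = 1 := by
      have hn2 : ‖b.repr ω‖ = 1 := by rw [LinearIsometryEquiv.norm_map]; exact hn
      rw [EuclideanSpace.norm_eq] at hn2
      have h0 : b.repr ω 0 = s := b.repr_apply_apply ω _
      have h1 : b.repr ω 1 = c := b.repr_apply_apply ω 1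
      rw [Fin.sum_univ_two] at hn2
      have := Real.sqrt_eq_one.mp (by simpa [Real.norm_eq_abs, sq_abs] using hn2)
      rw [h0, h1] at this
      linarith [this]
    have hst : |s| ≤ t := by rw [← hb0] at hip; exact hip
    have hc2 : c ^ 2 = 1 - s ^ 2 := by linarith
    have hmem : s ∈ Set.Icc (-t) t := ⟨by linarith [(abs_le.mp hst).1], (abs_le.mp hst).2⟩
    rcases le_or_gt 0 c with hcpos | hcneg
    · left
      refine ⟨s, hmem, ?_⟩
      rw [hf]
      simp only [one_mul]
      rw [← hc2, Real.sqrt_sq_eq_abs, abs_of_nonneg hcpos]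
      exact hsum
    · right
      refine ⟨s, hmem, ?_⟩
      rw [hf]
      simp only [neg_one_mul]
      rw [← hc2, Real.sqrt_sq_eq_abs, abs_of_neg hcneg]
      simpa using hsum
  -- measure estimate
  have hIccsub : Set.Icc (-t) t ⊆ Set.Icc (-(Real.sqrt 3 / 2)) (Real.sqrt 3 / 2) :=
    Set.Icc_subset_Icc (by linarith) ht'
  have himg : ∀ ε : ℝ, |ε| = 1 → μH[1] (f ε '' Set.Icc (-t) t) ≤ ENNReal.ofReal (6 * t) := by
    intro ε hε
    calc μH[1] (f ε '' Set.Icc (-t) t)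
        ≤ ((3 : NNReal) : ℝ≥0∞) ^ (1 : ℝ) * μH[1] (Set.Icc (-t) t) :=
          ((hlip ε hε).mono hIccsub).hausdorffMeasure_image_le (by norm_num)
      _ = 3 * ENNReal.ofReal (2 * t) := by
          rw [hausdorffMeasure_real, Real.volume_Icc, ENNReal.rpow_one,
            show t - -t = 2 * t by ring]
          norm_num
      _ = ENNReal.ofReal (6 * t) := by
          rw [show (6 : ℝ) * t = 3 * (2 * t) by ring,
            ENNReal.ofReal_mul (by norm_num : (0:ℝ) ≤ 3), ENNReal.ofReal_ofNat]
  calc μH[1] {ω : EuclideanSpace ℝ (Fin 2) | ‖ω‖ = 1 ∧ |⟪e, ω⟫| ≤ t}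
      ≤ μH[1] (f 1 '' Set.Icc (-t) t ∪ f (-1) '' Set.Icc (-t) t) := measure_mono cover
    _ ≤ μH[1] (f 1 '' Set.Icc (-t) t) + μH[1] (f (-1) '' Set.Icc (-t) t) := measure_union_le _ _
    _ ≤ ENNReal.ofReal (6 * t) + ENNReal.ofReal (6 * t) := by
        gcongr
        · exact himg 1 (by norm_num)
        · exact himg (-1) (by norm_num)
    _ ≤ ENNReal.ofReal (700 * t) := by
        rw [← ENNReal.ofReal_add (by linarith) (by linarith)]
        exact ENNReal.ofReal_le_ofReal (by linarith)

lemma band3 (e : EuclideanSpace ℝ (Fin 3)) (he : ‖e‖ = 1) (t : ℝ) (ht : 0 < t)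
    (ht' : t ≤ Real.sqrt 3 / 2) :
    μH[2] {ω : EuclideanSpace ℝ (Fin 3) | ‖ω‖ = 1 ∧ |⟪e, ω⟫| ≤ t}
      ≤ ENNReal.ofReal (700 * t) := by
  obtain ⟨b, hb0⟩ := extendBasis (by norm_num) e he
  have hb1 : ‖b 1‖ = 1 := b.orthonormal.1 1
  have hb2 : ‖b 2‖ = 1 := b.orthonormal.1 2
  have h3le : Real.sqrt 3 ≤ 2 := by
    nlinarith [Real.sq_sqrt (show (0:ℝ) ≤ 3 by norm_num), Real.sqrt_nonneg 3]
  set g : ℝ → ℝ := fun s => Real.sqrt (1 - s ^ 2) with hg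
  set f : (Fin 2 → ℝ) → EuclideanSpace ℝ (Fin 3) :=
    fun v => v 0 • b ⟨0, by norm_num⟩ + (g (v 0) * Real.cos (v 1)) • b 1
      + (g (v 0) * Real.sin (v 1)) • b 2 with hf
  have hgle : ∀ s : ℝ, |g s| ≤ 1 := by
    intro s
    rw [hg, abs_of_nonneg (Real.sqrt_nonneg _)]
    calc Real.sqrt (1 - s ^ 2) ≤ Real.sqrt 1 := Real.sqrt_le_sqrt (by nlinarith [sq_nonneg s])
      _ = 1 := Real.sqrt_one
  have hlip : LipschitzOnWith 7 f {v : Fin 2 → ℝ | |v 0| ≤ Real.sqrt 3 / 2} := by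
    rw [lipschitzOnWith_iff_dist_le_mul]
    intro v hv w hw
    have hv0 : |v 0| ≤ Real.sqrt 3 / 2 := hv
    have hw0 : |w 0| ≤ Real.sqrt 3 / 2 := hw
    have hsq : |g (v 0) - g (w 0)| ≤ Real.sqrt 3 * |v 0 - w 0| := sqrtdiff hv0 hw0
    have hd0 : |v 0 - w 0| ≤ dist v w := by
      rw [← Real.dist_eq]; exact dist_le_pi_dist v w 0
    have hd1 : |v 1 - w 1| ≤ dist v w := by
      rw [← Real.dist_eq]; exact dist_le_pi_dist v w 1
    have hcosd : |Real.cos (v 1) - Real.cos (w 1)| ≤ |v 1 - w 1| := by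
      have := lipCos.dist_le_mul (v 1) (w 1)
      rwa [Real.dist_eq, Real.dist_eq, NNReal.coe_one, one_mul] at this
    have hsind : |Real.sin (v 1) - Real.sin (w 1)| ≤ |v 1 - w 1| := by
      have := lipSin.dist_le_mul (v 1) (w 1)
      rwa [Real.dist_eq, Real.dist_eq, NNReal.coe_one, one_mul] at this
    have hA : |g (v 0) * Real.cos (v 1) - g (w 0) * Real.cos (w 1)|
        ≤ Real.sqrt 3 * |v 0 - w 0| + |v 1 - w 1| := by
      have hsplit : g (v 0) * Real.cos (v 1) - g (w 0) * Real.cos (w 1)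
          = (g (v 0) - g (w 0)) * Real.cos (v 1) + g (w 0) * (Real.cos (v 1) - Real.cos (w 1)) := by
        ring
      rw [hsplit]
      calc |(g (v 0) - g (w 0)) * Real.cos (v 1) + g (w 0) * (Real.cos (v 1) - Real.cos (w 1))|
          ≤ |(g (v 0) - g (w 0)) * Real.cos (v 1)| + |g (w 0) * (Real.cos (v 1) - Real.cos (w 1))| :=
            abs_add_le _ _
        _ = |g (v 0) - g (w 0)| * |Real.cos (v 1)| + |g (w 0)| * |Real.cos (v 1) - Real.cos (w 1)| := by
            rw [abs_mul, abs_mul]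
        _ ≤ Real.sqrt 3 * |v 0 - w 0| * 1 + 1 * |v 1 - w 1| :=
            add_le_add (mul_le_mul hsq (Real.abs_cos_le_one _) (abs_nonneg _) (by positivity))
              (mul_le_mul (hgle _) hcosd (abs_nonneg _) (by norm_num))
        _ = Real.sqrt 3 * |v 0 - w 0| + |v 1 - w 1| := by ring
    have hB : |g (v 0) * Real.sin (v 1) - g (w 0) * Real.sin (w 1)|
        ≤ Real.sqrt 3 * |v 0 - w 0| + |v 1 - w 1| := by
      have hsplit : g (v 0) * Real.sin (v 1) - g (w 0) * Real.sin (w 1)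
          = (g (v 0) - g (w 0)) * Real.sin (v 1) + g (w 0) * (Real.sin (v 1) - Real.sin (w 1)) := by
        ring
      rw [hsplit]
      calc |(g (v 0) - g (w 0)) * Real.sin (v 1) + g (w 0) * (Real.sin (v 1) - Real.sin (w 1))|
          ≤ |(g (v 0) - g (w 0)) * Real.sin (v 1)| + |g (w 0) * (Real.sin (v 1) - Real.sin (w 1))| :=
            abs_add_le _ _
        _ = |g (v 0) - g (w 0)| * |Real.sin (v 1)| + |g (w 0)| * |Real.sin (v 1) - Real.sin (w 1)| := by
            rw [abs_mul, abs_mul]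
        _ ≤ Real.sqrt 3 * |v 0 - w 0| * 1 + 1 * |v 1 - w 1| :=
            add_le_add (mul_le_mul hsq (Real.abs_sin_le_one _) (abs_nonneg _) (by positivity))
              (mul_le_mul (hgle _) hsind (abs_nonneg _) (by norm_num))
        _ = Real.sqrt 3 * |v 0 - w 0| + |v 1 - w 1| := by ring
    have hdiff : f v - f w = (v 0 - w 0) • b ⟨0, by norm_num⟩
        + (g (v 0) * Real.cos (v 1) - g (w 0) * Real.cos (w 1)) • b 1
        + (g (v 0) * Real.sin (v 1) - g (w 0) * Real.sin (w 1)) • b 2 := by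
      rw [hf]; module
    have hnorm : dist (f v) (f w) ≤ |v 0 - w 0|
        + |g (v 0) * Real.cos (v 1) - g (w 0) * Real.cos (w 1)|
        + |g (v 0) * Real.sin (v 1) - g (w 0) * Real.sin (w 1)| := by
      rw [dist_eq_norm, hdiff]
      calc ‖(v 0 - w 0) • b ⟨0, by norm_num⟩
            + (g (v 0) * Real.cos (v 1) - g (w 0) * Real.cos (w 1)) • b 1
            + (g (v 0) * Real.sin (v 1) - g (w 0) * Real.sin (w 1)) • b 2‖
          ≤ ‖(v 0 - w 0) • b ⟨0, by norm_num⟩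
            + (g (v 0) * Real.cos (v 1) - g (w 0) * Real.cos (w 1)) • b 1‖
            + ‖(g (v 0) * Real.sin (v 1) - g (w 0) * Real.sin (w 1)) • b 2‖ := norm_add_le _ _
        _ ≤ ‖(v 0 - w 0) • b ⟨0, by norm_num⟩‖
            + ‖(g (v 0) * Real.cos (v 1) - g (w 0) * Real.cos (w 1)) • b 1‖
            + ‖(g (v 0) * Real.sin (v 1) - g (w 0) * Real.sin (w 1)) • b 2‖ := by
            gcongr; exact norm_add_le _ _
        _ = |v 0 - w 0| + |g (v 0) * Real.cos (v 1) - g (w 0) * Real.cos (w 1)|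
            + |g (v 0) * Real.sin (v 1) - g (w 0) * Real.sin (w 1)| := by
            rw [norm_smul, norm_smul, norm_smul, hb0, he, hb1, hb2, Real.norm_eq_abs,
              Real.norm_eq_abs, Real.norm_eq_abs]
            ring
    calc dist (f v) (f w) ≤ |v 0 - w 0|
        + |g (v 0) * Real.cos (v 1) - g (w 0) * Real.cos (w 1)|
        + |g (v 0) * Real.sin (v 1) - g (w 0) * Real.sin (w 1)| := hnorm
      _ ≤ |v 0 - w 0| + (Real.sqrt 3 * |v 0 - w 0| + |v 1 - w 1|)
          + (Real.sqrt 3 * |v 0 - w 0| + |v 1 - w 1|) := by linarith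
      _ ≤ dist v w + (2 * dist v w + dist v w) + (2 * dist v w + dist v w) := by
          have h1 : Real.sqrt 3 * |v 0 - w 0| ≤ 2 * dist v w := by
            nlinarith [abs_nonneg (v 0 - w 0), Real.sqrt_nonneg 3, dist_nonneg (x := v) (y := w)]
          linarith
      _ = 7 * dist v w := by ring
  -- coverage
  have cover : {ω : EuclideanSpace ℝ (Fin 3) | ‖ω‖ = 1 ∧ |⟪e, ω⟫| ≤ t}
      ⊆ f '' Set.Icc ![-t, -Real.pi] ![t, Real.pi] := by
    rintro ω ⟨hn, hip⟩
    set s := ⟪b ⟨0, by norm_num⟩, ω⟫ with hs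
    set p := ⟪b 1, ω⟫ with hp
    set q := ⟪b 2, ω⟫ with hq
    have hsum : s • b ⟨0, by norm_num⟩ + p • b 1 + q • b 2 = ω := by
      have h0 := b.sum_repr' ω
      rw [Fin.sum_univ_three] at h0
      exact h0
    have hparse : s ^ 2 + p ^ 2 + q ^ 2 = 1 := by
      have hn2 : ‖b.repr ω‖ = 1 := by rw [LinearIsometryEquiv.norm_map]; exact hn
      rw [EuclideanSpace.norm_eq] at hn2
      have h0 : b.repr ω 0 = s := b.repr_apply_apply ω _
      have h1 : b.repr ω 1 = p := b.repr_apply_apply ω 1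
      have h2 : b.repr ω 2 = q := b.repr_apply_apply ω 2
      rw [Fin.sum_univ_three] at hn2
      have := Real.sqrt_eq_one.mp (by simpa [Real.norm_eq_abs, sq_abs] using hn2)
      rw [h0, h1, h2] at this
      linarith [this]
    have hst : |s| ≤ t := by rw [← hb0] at hip; exact hip
    have hstt : |s| ≤ Real.sqrt 3 / 2 := le_trans hst ht'
    have hs34 : s ^ 2 ≤ 3 / 4 := sq34 hstt
    have hrpos : 0 < g s := by
      rw [hg]
      exact Real.sqrt_pos.mpr (by nlinarith)
    have hr2 : g s ^ 2 = 1 - s ^ 2 := Real.sq_sqrt (by nlinarith)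
    have hpq : p ^ 2 + q ^ 2 = g s ^ 2 := by rw [hr2]; linarith
    obtain ⟨θ, hθmem, hpθ, hqθ⟩ := circleParam hrpos hpq
    refine ⟨![s, θ], ?_, ?_⟩
    · rw [Set.mem_Icc]
      constructor <;> intro i <;> fin_cases i <;>
        simp [Matrix.cons_val_zero, Matrix.cons_val_one] <;>
        first
          | linarith [(abs_le.mp hst).1, (abs_le.mp hst).2]
          | linarith [hθmem.1, hθmem.2]
    · rw [hf]
      simp only [Matrix.cons_val_zero, Matrix.cons_val_one, Matrix.head_cons]
      rw [← hpθ, ← hqθ]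
      exact hsum
  -- measure estimate
  have hμ : (μH[(2:ℝ)] : Measure (Fin 2 → ℝ)) = volume := by
    simpa using (hausdorffMeasure_pi_real (ι := Fin 2))
  have hRsub : Set.Icc ![-t, -Real.pi] ![t, Real.pi] ⊆ {v : Fin 2 → ℝ | |v 0| ≤ Real.sqrt 3 / 2} := by
    rintro v ⟨h1, h2⟩
    have ha := h1 0
    have hb := h2 0
    simp only [Matrix.cons_val_zero] at ha hb
    show |v 0| ≤ Real.sqrt 3 / 2
    rw [abs_le]
    exact ⟨by linarith, by linarith⟩
  calc μH[2] {ω : EuclideanSpace ℝ (Fin 3) | ‖ω‖ = 1 ∧ |⟪e, ω⟫| ≤ t}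
      ≤ μH[2] (f '' Set.Icc ![-t, -Real.pi] ![t, Real.pi]) := measure_mono cover
    _ ≤ ((7 : NNReal) : ℝ≥0∞) ^ (2 : ℝ) * μH[2] (Set.Icc ![-t, -Real.pi] ![t, Real.pi]) :=
        (hlip.mono hRsub).hausdorffMeasure_image_le (by norm_num)
    _ = 49 * (ENNReal.ofReal (2 * t) * ENNReal.ofReal (2 * Real.pi)) := by
        rw [hμ, Real.volume_Icc_pi, Fin.prod_univ_two]
        simp only [Matrix.cons_val_zero, Matrix.cons_val_one, Matrix.head_cons]
        rw [show t - -t = 2 * t by ring, show Real.pi - -Real.pi = 2 * Real.pi by ring]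
        rw [show ((7 : NNReal) : ℝ≥0∞) ^ (2 : ℝ) = 49 by
          rw [show (2:ℝ) = ((2:ℕ):ℝ) by norm_num, ENNReal.rpow_natCast]
          norm_num]
    _ = ENNReal.ofReal (49 * (2 * t * (2 * Real.pi))) := by
        rw [ENNReal.ofReal_mul (by norm_num : (0:ℝ) ≤ 49),
          ENNReal.ofReal_mul (by positivity : (0:ℝ) ≤ 2 * t)]
        norm_num
    _ ≤ ENNReal.ofReal (700 * t) := by
        apply ENNReal.ofReal_le_ofReal
        nlinarith [Real.pi_lt_d2, ht.le]

set_option maxHeartbeats 1600000 in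
lemma reduction {d : ℕ} (hd : 2 ≤ d) (u₁ u₂ : EuclideanSpace ℝ (Fin d))
    (h₁ : ‖u₁‖ = 1) (h₂ : ‖u₂‖ = 1) (δ : ℝ) (hδ : 0 < δ) (hδ' : δ ≤ 2 / 5) :
    ∃ w : EuclideanSpace ℝ (Fin d), ‖w‖ = 1 ∧
      ∀ ω : EuclideanSpace ℝ (Fin d), ‖ω‖ = 1 →
        ‖(u₁ - (2 * ⟪u₁, ω⟫) • ω) - u₂‖ ≤ δ → |⟪w, ω⟫| ≤ 2 * δ := by
  have hpar : ‖u₁ + u₂‖ ^ 2 + ‖u₁ - u₂‖ ^ 2 = 4 := by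
    rw [norm_add_sq_real, norm_sub_sq_real, h₁, h₂]
    ring
  -- key facts valid for all ω in the set
  have key : ∀ ω : EuclideanSpace ℝ (Fin d), ‖ω‖ = 1 →
      ‖(u₁ - (2 * ⟪u₁, ω⟫) • ω) - u₂‖ ≤ δ →
      |⟪u₁ + u₂, ω⟫| ≤ δ ∧ ‖(u₁ - u₂) - ⟪u₁ - u₂, ω⟫ • ω‖ ≤ 2 * δ := by
    intro ω hω hvec
    set vec := (u₁ - (2 * ⟪u₁, ω⟫) • ω) - u₂ with hv
    have hinner : ⟪vec, ω⟫ = -⟪u₁ + u₂, ω⟫ := by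
      rw [hv]
      rw [inner_sub_left, inner_sub_left, real_inner_smul_left, inner_add_left]
      have : ⟪ω, ω⟫ = 1 := by
        rw [real_inner_self_eq_norm_sq, hω]; norm_num
      rw [this]
      ring
    have h1 : |⟪u₁ + u₂, ω⟫| ≤ δ := by
      have := abs_real_inner_le_norm vec ω
      rw [hinner, hω, mul_one] at this
      rw [abs_neg] at this
      linarith
    refine ⟨h1, ?_⟩
    have hid : (u₁ - u₂) - ⟪u₁ - u₂, ω⟫ • ω = vec + ⟪u₁ + u₂, ω⟫ • ω := by
      have hsc : ⟪u₁ - u₂, ω⟫ = ⟪u₁, ω⟫ - ⟪u₂, ω⟫ := inner_sub_left _ _ _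
      have hsc2 : ⟪u₁ + u₂, ω⟫ = ⟪u₁, ω⟫ + ⟪u₂, ω⟫ := inner_add_left _ _ _
      rw [hv, hsc, hsc2]
      module
    rw [hid]
    calc ‖vec + ⟪u₁ + u₂, ω⟫ • ω‖ ≤ ‖vec‖ + ‖⟪u₁ + u₂, ω⟫ • ω‖ := norm_add_le _ _
      _ ≤ δ + δ := by
          apply add_le_add hvec
          rw [norm_smul, Real.norm_eq_abs, hω, mul_one]
          exact h1
      _ = 2 * δ := by ring
  rcases le_or_gt 2 (‖u₁ + u₂‖ ^ 2) with ha | hb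
  · -- use w = normalized (u₁ + u₂)
    have hna : (0:ℝ) < ‖u₁ + u₂‖ := by nlinarith [norm_nonneg (u₁ + u₂)]
    have hna1 : (1:ℝ) ≤ ‖u₁ + u₂‖ := by nlinarith
    refine ⟨‖u₁ + u₂‖⁻¹ • (u₁ + u₂), ?_, ?_⟩
    · rw [norm_smul, Real.norm_eq_abs, abs_of_pos (by positivity)]
      field_simp
    · intro ω hω hvec
      obtain ⟨h1, -⟩ := key ω hω hvec
      rw [real_inner_smul_left, abs_mul, abs_of_pos (by positivity : (0:ℝ) < ‖u₁ + u₂‖⁻¹)]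
      calc ‖u₁ + u₂‖⁻¹ * |⟪u₁ + u₂, ω⟫| ≤ 1 * δ := by
            apply mul_le_mul _ h1 (abs_nonneg _) (by norm_num)
            rw [inv_le_one_iff₀]
            right; exact hna1
        _ ≤ 2 * δ := by linarith
  · -- use w = unit vector orthogonal to normalized (u₁ - u₂)
    have hb2 : (2:ℝ) ≤ ‖u₁ - u₂‖ ^ 2 := by nlinarith
    set nb := ‖u₁ - u₂‖ with hnb
    have hnbpos : (0:ℝ) < nb := by nlinarith [norm_nonneg (u₁ - u₂)]
    set e : EuclideanSpace ℝ (Fin d) := nb⁻¹ • (u₁ - u₂) with he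
    have henorm : ‖e‖ = 1 := by
      rw [he, norm_smul, Real.norm_eq_abs, abs_of_pos (by positivity)]
      field_simp
      exact hnb.symm
    obtain ⟨bb, hbb0⟩ := extendBasis (by omega) e henorm
    set w := bb ⟨1, by omega⟩ with hw
    have hwnorm : ‖w‖ = 1 := bb.orthonormal.1 _
    have hwe : ⟪w, e⟫ = 0 := by
      rw [← hbb0]
      exact bb.orthonormal.2 (by simp [Fin.ext_iff])
    refine ⟨w, hwnorm, ?_⟩
    intro ω hω hvec
    obtain ⟨h1, h2⟩ := key ω hω hvec
    set c := ⟪e, ω⟫ with hc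
    -- ‖e - c • ω‖ * nb ≤ 2δ
    have hecω : nb • (e - c • ω) = (u₁ - u₂) - ⟪u₁ - u₂, ω⟫ • ω := by
      have hc' : c = nb⁻¹ * ⟪u₁ - u₂, ω⟫ := by rw [hc, he, real_inner_smul_left]
      rw [he, hc']
      rw [smul_sub, smul_smul, smul_smul]
      rw [mul_inv_cancel₀ (ne_of_gt hnbpos)]
      rw [show nb * (nb⁻¹ * ⟪u₁ - u₂, ω⟫) = ⟪u₁ - u₂, ω⟫ by field_simp]
      module
    have hkey : nb * ‖e - c • ω‖ ≤ 2 * δ := by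
      have : ‖nb • (e - c • ω)‖ = nb * ‖e - c • ω‖ := by
        rw [norm_smul, Real.norm_eq_abs, abs_of_pos hnbpos]
      rw [← this, hecω]
      exact h2
    -- ‖e - c • ω‖ ^ 2 = 1 - c ^ 2
    have hnormsq : ‖e - c • ω‖ ^ 2 = 1 - c ^ 2 := by
      rw [norm_sub_sq_real, henorm, real_inner_smul_right, norm_smul, Real.norm_eq_abs, hω]
      rw [← hc]
      simp [sq_abs]
      ring
    -- c ^ 2 ≥ 17/25
    have hc2 : 17 / 25 ≤ c ^ 2 := by
      have h0 : (0:ℝ) ≤ ‖e - c • ω‖ := norm_nonneg _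
      have hsq : nb ^ 2 * (1 - c ^ 2) ≤ 4 * δ ^ 2 := by
        have h4 := mul_le_mul hkey hkey (by positivity) (by linarith)
        have hx : nb ^ 2 * (1 - c ^ 2) = (nb * ‖e - c • ω‖) * (nb * ‖e - c • ω‖) := by
          rw [show (nb * ‖e - c • ω‖) * (nb * ‖e - c • ω‖) = nb ^ 2 * ‖e - c • ω‖ ^ 2 by ring,
            hnormsq]
        rw [hx]
        have h5 : 2 * δ * (2 * δ) = 4 * δ ^ 2 := by ring
        linarith
      rcases le_or_gt (1 - c ^ 2) 0 with hcc | hcc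
      · linarith
      · have h6 : 2 * (1 - c ^ 2) ≤ nb ^ 2 * (1 - c ^ 2) :=
          mul_le_mul_of_nonneg_right hb2 (le_of_lt hcc)
        have h7 : δ ^ 2 ≤ 4 / 25 := by nlinarith
        linarith
    -- |⟪w, ω⟫| bound
    have hwip : |c| * |⟪w, ω⟫| ≤ ‖e - c • ω‖ := by
      have hinner : ⟪w, e - c • ω⟫ = -(c * ⟪w, ω⟫) := by
        rw [inner_sub_right, hwe, real_inner_smul_right]
        ring
      have := abs_real_inner_le_norm w (e - c • ω)
      rw [hinner, hwnorm, one_mul, abs_neg, abs_mul] at this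
      exact this
    have hfinal : nb * (|c| * |⟪w, ω⟫|) ≤ 2 * δ :=
      le_trans (mul_le_mul_of_nonneg_left hwip (le_of_lt hnbpos)) hkey
    -- nb * |c| ≥ 1
    have hnbc : 1 ≤ nb * |c| := by
      have h0 : (nb * |c|) ^ 2 = nb ^ 2 * c ^ 2 := by
        rw [mul_pow, sq_abs]
      have h1' : (1:ℝ) ≤ (nb * |c|) ^ 2 := by
        rw [h0]
        calc (1:ℝ) ≤ 2 * (17 / 25) := by norm_num
          _ ≤ nb ^ 2 * c ^ 2 := by
              apply mul_le_mul hb2 hc2 (by norm_num) (by nlinarith [sq_nonneg nb])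
      nlinarith [mul_nonneg (le_of_lt hnbpos) (abs_nonneg c)]
    calc |⟪w, ω⟫| = 1 * |⟪w, ω⟫| := by ring
      _ ≤ (nb * |c|) * |⟪w, ω⟫| := mul_le_mul_of_nonneg_right hnbc (abs_nonneg _)
      _ = nb * (|c| * |⟪w, ω⟫|) := by ring
      _ ≤ 2 * δ := hfinal

lemma abs_le_sqrt3div2 {x : ℝ} (h : x ^ 2 ≤ 3 / 4) : |x| ≤ Real.sqrt 3 / 2 := by
  have h1 : Real.sqrt 3 ^ 2 = 3 := Real.sq_sqrt (by norm_num)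
  have h2 : (0:ℝ) < Real.sqrt 3 := Real.sqrt_pos.mpr (by norm_num)
  nlinarith [sq_abs x, abs_nonneg x]

lemma sqrt3div2_ge : (4:ℝ) / 5 ≤ Real.sqrt 3 / 2 := by
  have h1 : Real.sqrt 3 ^ 2 = 3 := Real.sq_sqrt (by norm_num)
  nlinarith [Real.sqrt_nonneg 3]

lemma norm_one_coords2 {ω : EuclideanSpace ℝ (Fin 2)} (hn : ‖ω‖ = 1) :
    ω 0 ^ 2 + ω 1 ^ 2 = 1 := by
  rw [EuclideanSpace.norm_eq, Fin.sum_univ_two] at hn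
  have := Real.sqrt_eq_one.mp (by simpa [Real.norm_eq_abs, sq_abs] using hn)
  linarith

lemma norm_one_coords3 {ω : EuclideanSpace ℝ (Fin 3)} (hn : ‖ω‖ = 1) :
    ω 0 ^ 2 + ω 1 ^ 2 + ω 2 ^ 2 = 1 := by
  rw [EuclideanSpace.norm_eq, Fin.sum_univ_three] at hn
  have := Real.sqrt_eq_one.mp (by simpa [Real.norm_eq_abs, sq_abs] using hn)
  linarith

theorem reflection_sphere_measure_estimate :
    ∀ d : ℕ, d = 2 ∨ d = 3 →
      ∃ C : ℝ, 0 < C ∧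
        ∀ u₁ u₂ : EuclideanSpace ℝ (Fin d), ‖u₁‖ = 1 → ‖u₂‖ = 1 →
          ∀ δ : ℝ, 0 < δ → δ ≤ 1 →
            μH[(d : ℝ) - 1]
                {ω : EuclideanSpace ℝ (Fin d) | ‖ω‖ = 1 ∧
                  ‖(u₁ - (2 * ⟪u₁, ω⟫) • ω) - u₂‖ ≤ δ}
              ≤ ENNReal.ofReal (C * δ) := by
  intro d hd
  refine ⟨3500, by norm_num, ?_⟩
  intro u₁ u₂ h₁ h₂ δ hδ hδ1
  rcases hd with rfl | rfl
  · -- d = 2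
    rw [show ((2:ℕ):ℝ) - 1 = (1:ℝ) by norm_num]
    rcases le_or_gt δ (2/5) with hsmall | hlarge
    · obtain ⟨w, hw, hsub⟩ := reduction (le_refl 2) u₁ u₂ h₁ h₂ δ hδ hsmall
      have hss : {ω : EuclideanSpace ℝ (Fin 2) | ‖ω‖ = 1 ∧
            ‖(u₁ - (2 * ⟪u₁, ω⟫) • ω) - u₂‖ ≤ δ}
          ⊆ {ω : EuclideanSpace ℝ (Fin 2) | ‖ω‖ = 1 ∧ |⟪w, ω⟫| ≤ 2 * δ} :=
        fun ω hm => ⟨hm.1, hsub ω hm.1 hm.2⟩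
      calc μH[1] {ω : EuclideanSpace ℝ (Fin 2) | ‖ω‖ = 1 ∧
            ‖(u₁ - (2 * ⟪u₁, ω⟫) • ω) - u₂‖ ≤ δ}
          ≤ μH[1] {ω : EuclideanSpace ℝ (Fin 2) | ‖ω‖ = 1 ∧ |⟪w, ω⟫| ≤ 2 * δ} :=
            measure_mono hss
        _ ≤ ENNReal.ofReal (700 * (2 * δ)) :=
            band2 w hw (2 * δ) (by linarith) (by linarith [sqrt3div2_ge])
        _ ≤ ENNReal.ofReal (3500 * δ) := ENNReal.ofReal_le_ofReal (by linarith)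
    · -- large δ : cover the whole sphere by two bands
      set e0 : EuclideanSpace ℝ (Fin 2) := EuclideanSpace.single 0 1 with he0
      set e1 : EuclideanSpace ℝ (Fin 2) := EuclideanSpace.single 1 1 with he1
      have hne0 : ‖e0‖ = 1 := by rw [he0, EuclideanSpace.norm_single]; norm_num
      have hne1 : ‖e1‖ = 1 := by rw [he1, EuclideanSpace.norm_single]; norm_num
      have hcov : {ω : EuclideanSpace ℝ (Fin 2) | ‖ω‖ = 1 ∧
            ‖(u₁ - (2 * ⟪u₁, ω⟫) • ω) - u₂‖ ≤ δ}
          ⊆ {ω : EuclideanSpace ℝ (Fin 2) | ‖ω‖ = 1 ∧ |⟪e0, ω⟫| ≤ 1/2}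
            ∪ {ω : EuclideanSpace ℝ (Fin 2) | ‖ω‖ = 1 ∧ |⟪e1, ω⟫| ≤ Real.sqrt 3 / 2} := by
        rintro ω ⟨hn, -⟩
        have hco := norm_one_coords2 hn
        have hi0 : ⟪e0, ω⟫ = ω 0 := by
          rw [he0, EuclideanSpace.inner_single_left]; simp
        have hi1 : ⟪e1, ω⟫ = ω 1 := by
          rw [he1, EuclideanSpace.inner_single_left]; simp
        rcases le_or_gt |ω 0| (1/2) with h0 | h0
        · left; exact ⟨hn, by rw [hi0]; exact h0⟩
        · right
          refine ⟨hn, ?_⟩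
          rw [hi1]
          apply abs_le_sqrt3div2
          nlinarith [sq_abs (ω 0), abs_nonneg (ω 0)]
      calc μH[1] {ω : EuclideanSpace ℝ (Fin 2) | ‖ω‖ = 1 ∧
            ‖(u₁ - (2 * ⟪u₁, ω⟫) • ω) - u₂‖ ≤ δ}
          ≤ μH[1] ({ω : EuclideanSpace ℝ (Fin 2) | ‖ω‖ = 1 ∧ |⟪e0, ω⟫| ≤ 1/2}
            ∪ {ω : EuclideanSpace ℝ (Fin 2) | ‖ω‖ = 1 ∧ |⟪e1, ω⟫| ≤ Real.sqrt 3 / 2}) :=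
            measure_mono hcov
        _ ≤ μH[1] {ω : EuclideanSpace ℝ (Fin 2) | ‖ω‖ = 1 ∧ |⟪e0, ω⟫| ≤ 1/2}
            + μH[1] {ω : EuclideanSpace ℝ (Fin 2) | ‖ω‖ = 1 ∧ |⟪e1, ω⟫| ≤ Real.sqrt 3 / 2} :=
            measure_union_le _ _
        _ ≤ ENNReal.ofReal (700 * (1/2)) + ENNReal.ofReal (700 * (Real.sqrt 3 / 2)) := by
            gcongr
            · exact band2 e0 hne0 (1/2) (by norm_num) (by linarith [sqrt3div2_ge])
            · exact band2 e1 hne1 (Real.sqrt 3 / 2)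
                (by positivity) (le_refl _)
        _ ≤ ENNReal.ofReal (3500 * δ) := by
            rw [← ENNReal.ofReal_add (by norm_num) (by positivity)]
            apply ENNReal.ofReal_le_ofReal
            have h3le : Real.sqrt 3 ≤ 2 := by
              nlinarith [Real.sq_sqrt (show (0:ℝ) ≤ 3 by norm_num), Real.sqrt_nonneg 3]
            nlinarith
  · -- d = 3
    rw [show ((3:ℕ):ℝ) - 1 = (2:ℝ) by norm_num]
    rcases le_or_gt δ (2/5) with hsmall | hlarge
    · obtain ⟨w, hw, hsub⟩ := reduction (by norm_num) u₁ u₂ h₁ h₂ δ hδ hsmall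
      have hss : {ω : EuclideanSpace ℝ (Fin 3) | ‖ω‖ = 1 ∧
            ‖(u₁ - (2 * ⟪u₁, ω⟫) • ω) - u₂‖ ≤ δ}
          ⊆ {ω : EuclideanSpace ℝ (Fin 3) | ‖ω‖ = 1 ∧ |⟪w, ω⟫| ≤ 2 * δ} :=
        fun ω hm => ⟨hm.1, hsub ω hm.1 hm.2⟩
      calc μH[2] {ω : EuclideanSpace ℝ (Fin 3) | ‖ω‖ = 1 ∧
            ‖(u₁ - (2 * ⟪u₁, ω⟫) • ω) - u₂‖ ≤ δ}
          ≤ μH[2] {ω : EuclideanSpace ℝ (Fin 3) | ‖ω‖ = 1 ∧ |⟪w, ω⟫| ≤ 2 * δ} :=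
            measure_mono hss
        _ ≤ ENNReal.ofReal (700 * (2 * δ)) :=
            band3 w hw (2 * δ) (by linarith) (by linarith [sqrt3div2_ge])
        _ ≤ ENNReal.ofReal (3500 * δ) := ENNReal.ofReal_le_ofReal (by linarith)
    · set e0 : EuclideanSpace ℝ (Fin 3) := EuclideanSpace.single 0 1 with he0
      set e1 : EuclideanSpace ℝ (Fin 3) := EuclideanSpace.single 1 1 with he1
      have hne0 : ‖e0‖ = 1 := by rw [he0, EuclideanSpace.norm_single]; norm_num
      have hne1 : ‖e1‖ = 1 := by rw [he1, EuclideanSpace.norm_single]; norm_num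
      have hcov : {ω : EuclideanSpace ℝ (Fin 3) | ‖ω‖ = 1 ∧
            ‖(u₁ - (2 * ⟪u₁, ω⟫) • ω) - u₂‖ ≤ δ}
          ⊆ {ω : EuclideanSpace ℝ (Fin 3) | ‖ω‖ = 1 ∧ |⟪e0, ω⟫| ≤ 1/2}
            ∪ {ω : EuclideanSpace ℝ (Fin 3) | ‖ω‖ = 1 ∧ |⟪e1, ω⟫| ≤ Real.sqrt 3 / 2} := by
        rintro ω ⟨hn, -⟩
        have hco := norm_one_coords3 hn
        have hi0 : ⟪e0, ω⟫ = ω 0 := by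
          rw [he0, EuclideanSpace.inner_single_left]; simp
        have hi1 : ⟪e1, ω⟫ = ω 1 := by
          rw [he1, EuclideanSpace.inner_single_left]; simp
        rcases le_or_gt |ω 0| (1/2) with h0 | h0
        · left; exact ⟨hn, by rw [hi0]; exact h0⟩
        · right
          refine ⟨hn, ?_⟩
          rw [hi1]
          apply abs_le_sqrt3div2
          nlinarith [sq_abs (ω 0), abs_nonneg (ω 0), sq_nonneg (ω 2)]
      calc μH[2] {ω : EuclideanSpace ℝ (Fin 3) | ‖ω‖ = 1 ∧
            ‖(u₁ - (2 * ⟪u₁, ω⟫) • ω) - u₂‖ ≤ δ}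
          ≤ μH[2] ({ω : EuclideanSpace ℝ (Fin 3) | ‖ω‖ = 1 ∧ |⟪e0, ω⟫| ≤ 1/2}
            ∪ {ω : EuclideanSpace ℝ (Fin 3) | ‖ω‖ = 1 ∧ |⟪e1, ω⟫| ≤ Real.sqrt 3 / 2}) :=
            measure_mono hcov
        _ ≤ μH[2] {ω : EuclideanSpace ℝ (Fin 3) | ‖ω‖ = 1 ∧ |⟪e0, ω⟫| ≤ 1/2}
            + μH[2] {ω : EuclideanSpace ℝ (Fin 3) | ‖ω‖ = 1 ∧ |⟪e1, ω⟫| ≤ Real.sqrt 3 / 2} :=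
            measure_union_le _ _
        _ ≤ ENNReal.ofReal (700 * (1/2)) + ENNReal.ofReal (700 * (Real.sqrt 3 / 2)) := by
            gcongr
            · exact band3 e0 hne0 (1/2) (by norm_num) (by linarith [sqrt3div2_ge])
            · exact band3 e1 hne1 (Real.sqrt 3 / 2)
                (by positivity) (le_refl _)
        _ ≤ ENNReal.ofReal (3500 * δ) := by
            rw [← ENNReal.ofReal_add (by norm_num) (by positivity)]
            apply ENNReal.ofReal_le_ofReal
            have h3le : Real.sqrt 3 ≤ 2 := by
              nlinarith [Real.sq_sqrt (show (0:ℝ) ≤ 3 by norm_num), Real.sqrt_nonneg 3]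
            nlinarith
end
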